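/- arXiv:2603.08431 — 2 statements merged into one kernel-verified Lean document; each statement's English description precedes it below -/
import Mathlib

section
/- Two expressions for the Gini index agree: 1 - (2/(n+1)) ∑_{a=0}^{n-1} L(a;x) = (1/(2(n+1))) ∑_{a,b} |x_a - x_b|, where L(a;x) are the Lorenz values (cumulative sums of the entries of x sorted in ascending order). -/
theorem gini_eq_lorenz_expression {n : ℕ} (x : Fin n → ℝ)
    (hx0 : ∀ a, 0 ≤ x a) (hx1 : ∑ a, x a = 1)
    (σ : Equiv.Perm (Fin n)) (hσ : Monotone fun a => x (σ a)) :
    1 - (2 / ((n : ℝ) + 1)) * ∑ a, ∑ i ∈ Finset.Iic a, x (σ i)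
      = (1 / (2 * ((n : ℝ) + 1))) * ∑ a, ∑ b, |x a - x b| := by
  set y : Fin n → ℝ := fun a => x (σ a) with hy
  have hy1 : ∑ a, y a = 1 := by rw [← hx1]; exact Equiv.sum_comp σ x
  -- permutation invariance of the double abs-sum
  have habs : ∑ a, ∑ b, |x a - x b| = ∑ a, ∑ b, |y a - y b| := by
    rw [← Equiv.sum_comp σ (fun a => ∑ b, |x a - x b|)]
    exact Finset.sum_congr rfl fun a _ =>
      (Equiv.sum_comp σ (fun b => |x (σ a) - x b|)).symm
  set S : ℝ := ∑ a, ∑ i ∈ Finset.Iic a, y i with hS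
  -- S = ∑ i, (n - i) * y i
  have hS2 : S = ∑ i : Fin n, ((n : ℝ) - (i : ℕ)) * y i := by
    rw [hS]
    have h1 : ∀ a : Fin n, ∑ i ∈ Finset.Iic a, y i
        = ∑ i : Fin n, if i ≤ a then y i else 0 := by
      intro a
      simp_rw [← Finset.mem_Iic (a := a)]
      rw [Finset.sum_ite_mem, Finset.univ_inter]
    simp_rw [h1]
    rw [Finset.sum_comm]
    refine Finset.sum_congr rfl fun i _ => ?_
    have h2 : ∑ a : Fin n, (if i ≤ a then y i else 0)
        = ∑ a ∈ Finset.Ici i, y i := by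
      simp_rw [← Finset.mem_Ici (a := i)]
      rw [Finset.sum_ite_mem, Finset.univ_inter]
    rw [h2, Finset.sum_const, Fin.card_Ici, nsmul_eq_mul,
      Nat.cast_sub (le_of_lt i.isLt)]
  -- double abs sum in terms of S
  have hdouble : ∑ a, ∑ b, |y a - y b| = 2 * (((n : ℝ) + 1) - 2 * S) := by
    have hsplit : ∀ a b : Fin n, |y a - y b|
        = (if b ≤ a then y a - y b else 0) + (if a ≤ b then y b - y a else 0) := by
      intro a b
      rcases lt_trichotomy a b with h | h | h
      · rw [if_neg (not_le.mpr h), if_pos h.le, abs_sub_comm,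
          abs_of_nonneg (sub_nonneg.mpr (hσ h.le))]
        ring
      · subst h; simp
      · rw [if_pos h.le, if_neg (not_le.mpr h),
          abs_of_nonneg (sub_nonneg.mpr (hσ h.le))]
        ring
    simp_rw [hsplit, Finset.sum_add_distrib]
    have e1 : ∑ a : Fin n, ∑ b : Fin n, (if b ≤ a then y a - y b else 0)
        = ∑ a : Fin n, ∑ b ∈ Finset.Iic a, (y a - y b) := by
      refine Finset.sum_congr rfl fun a _ => ?_
      simp_rw [← Finset.mem_Iic (a := a)]
      rw [Finset.sum_ite_mem, Finset.univ_inter]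
    have e2 : ∑ a : Fin n, ∑ b : Fin n, (if a ≤ b then y b - y a else 0)
        = ∑ a : Fin n, ∑ b ∈ Finset.Iic a, (y a - y b) := by
      rw [Finset.sum_comm]
      refine Finset.sum_congr rfl fun a _ => ?_
      simp_rw [← Finset.mem_Iic (a := a)]
      rw [Finset.sum_ite_mem, Finset.univ_inter]
    rw [e1, e2]
    have e3 : ∑ a : Fin n, ∑ b ∈ Finset.Iic a, (y a - y b)
        = (∑ a : Fin n, ((a : ℕ) + 1 : ℝ) * y a) - S := by
      rw [hS, ← Finset.sum_sub_distrib]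
      refine Finset.sum_congr rfl fun a _ => ?_
      rw [Finset.sum_sub_distrib, Finset.sum_const, Fin.card_Iic, nsmul_eq_mul]
      push_cast
      ring
    rw [e3]
    have e4 : (∑ a : Fin n, ((a : ℕ) + 1 : ℝ) * y a) = ((n : ℝ) + 1) - S := by
      have := hS2
      have e5 : (∑ a : Fin n, ((a : ℕ) + 1 : ℝ) * y a)
          + ∑ i : Fin n, ((n : ℝ) - (i : ℕ)) * y i = ((n : ℝ) + 1) * ∑ a, y a := by
        rw [← Finset.sum_add_distrib, Finset.mul_sum]
        refine Finset.sum_congr rfl fun a _ => ?_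
        ring
      rw [hy1, mul_one] at e5
      linarith [hS2]
    rw [e4]
    ring
  rw [habs, hdouble]
  have hn : (n : ℝ) + 1 ≠ 0 := by positivity
  field_simp
end

section
/- If P is an n×n doubly stochastic matrix and x a probability vector, then G(xP) ≤ G(x), where G is the Gini index. -/
/-!
Because the columns of `P` sum to one, `(xP)_a - (xP)_b` is the average of `x_c - x_d` with
weights `P_ca P_db`, so by the triangle inequality `|(xP)_a - (xP)_b|` is at most the same
average of `|x_c - x_d|`. Summing over `a` and `b` and using that the rows of `P` sum to one
gives back `∑_{c,d} |x_c - x_d|`.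
-/

open Finset Matrix

theorem vecMul_sub_vecMul_eq_sum_sum {ι R : Type*} [Fintype ι] [CommRing R] {P : Matrix ι ι R}
    (hPc : ∀ b, ∑ a, P a b = 1) (x : ι → R) (a b : ι) :
    (x ᵥ* P) a - (x ᵥ* P) b = ∑ c, ∑ d, P c a * P d b * (x c - x d) :=
  calc (x ᵥ* P) a - (x ᵥ* P) b
      = (∑ c, x c * P c a) * (∑ d, P d b) - (∑ c, P c a) * ∑ d, x d * P d b := by
        simp [vecMul, dotProduct, hPc]
    _ = ∑ c, ∑ d, P c a * P d b * (x c - x d) := by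
        simp only [sum_mul_sum, ← sum_sub_distrib]
        exact sum_congr rfl fun c _ => sum_congr rfl fun d _ => by ring

section

variable {ι R : Type*} [Fintype ι] [CommRing R] [LinearOrder R] [IsStrictOrderedRing R]
  {P : Matrix ι ι R}

theorem abs_vecMul_sub_vecMul_le (hP0 : ∀ a b, 0 ≤ P a b) (hPc : ∀ b, ∑ a, P a b = 1)
    (x : ι → R) (a b : ι) :
    |(x ᵥ* P) a - (x ᵥ* P) b| ≤ ∑ c, ∑ d, P c a * P d b * |x c - x d| := by
  rw [vecMul_sub_vecMul_eq_sum_sum hPc]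
  calc |∑ c, ∑ d, P c a * P d b * (x c - x d)|
      ≤ ∑ c, ∑ d, |P c a * P d b * (x c - x d)| :=
        (abs_sum_le_sum_abs _ _).trans (sum_le_sum fun c _ => abs_sum_le_sum_abs _ _)
    _ = ∑ c, ∑ d, P c a * P d b * |x c - x d| := by
        simp only [abs_mul, abs_of_nonneg (hP0 _ _)]

theorem sum_sum_abs_vecMul_sub_vecMul_le (hP0 : ∀ a b, 0 ≤ P a b)
    (hPr : ∀ a, ∑ b, P a b = 1) (hPc : ∀ b, ∑ a, P a b = 1) (x : ι → R) :
    ∑ a, ∑ b, |(x ᵥ* P) a - (x ᵥ* P) b| ≤ ∑ c, ∑ d, |x c - x d| :=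
  calc ∑ a, ∑ b, |(x ᵥ* P) a - (x ᵥ* P) b|
      ≤ ∑ a, ∑ b, ∑ c, ∑ d, P c a * P d b * |x c - x d| :=
        sum_le_sum fun a _ => sum_le_sum fun b _ => abs_vecMul_sub_vecMul_le hP0 hPc x a b
    _ = ∑ c, ∑ d, ∑ a, ∑ b, P c a * P d b * |x c - x d| := by
        simpa only [Fintype.sum_prod_type] using sum_comm (s := univ) (t := univ)
          (f := fun (p q : ι × ι) => P q.1 p.1 * P q.2 p.2 * |x q.1 - x q.2|)
    _ = ∑ c, ∑ d, |x c - x d| := by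
        simp only [← sum_mul, ← sum_mul_sum, hPr, one_mul]

end

theorem gini_mul_doublyStochastic_le_general {n : ℕ} (x : Fin n → ℝ) (P : Matrix (Fin n) (Fin n) ℝ)
    (hP0 : ∀ a b, 0 ≤ P a b) (hPr : ∀ a, ∑ b, P a b = 1) (hPc : ∀ b, ∑ a, P a b = 1) :
    (1 / (2 * ((n : ℝ) + 1))) * ∑ a, ∑ b, |(∑ c, x c * P c a) - (∑ c, x c * P c b)|
      ≤ (1 / (2 * ((n : ℝ) + 1))) * ∑ a, ∑ b, |x a - x b| :=
  mul_le_mul_of_nonneg_left (sum_sum_abs_vecMul_sub_vecMul_le hP0 hPr hPc x) (by positivity)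

theorem gini_mul_doublyStochastic_le {n : ℕ} (x : Fin n → ℝ) (P : Matrix (Fin n) (Fin n) ℝ)
    (hx0 : ∀ a, 0 ≤ x a) (hx1 : ∑ a, x a = 1)
    (hP0 : ∀ a b, 0 ≤ P a b) (hPr : ∀ a, ∑ b, P a b = 1) (hPc : ∀ b, ∑ a, P a b = 1) :
    (1 / (2 * ((n : ℝ) + 1))) * ∑ a, ∑ b, |(∑ c, x c * P c a) - (∑ c, x c * P c b)|
      ≤ (1 / (2 * ((n : ℝ) + 1))) * ∑ a, ∑ b, |x a - x b| :=
  gini_mul_doublyStochastic_le_general x P hP0 hPr hPc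
end
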